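/- Let G be a group (under composition) of Möbius transformations, each of which maps the unit disc 𝔻 onto itself, and let f : 𝔻 → ℂ be holomorphic with nowhere-vanishing derivative. Then the following are equivalent: (i) S_f(z) = S_f(g(z))·g′(z)² for every g ∈ G and z ∈ 𝔻 (i.e. S_f is a quadratic differential for G); (ii) for every g ∈ G there exist a, b, c, d ∈ ℂ with a·d − b·c = 1 such that c·f(z) + d ≠ 0 and f(g(z)) = (a·f(z) + b)/(c·f(z) + d) for all z ∈ 𝔻. Moreover, in case (ii) the Möbius transformation M_g with f∘g = M_g∘f is uniquely determined by g, and the assignment g ↦ M_g is a group homomorphism of G into the group of Möbius transformations. -/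

import Mathlib

/-!
Möbius maps have vanishing Schwarzian, so by the chain rule
`S (f ∘ g) = (S f ∘ g) * g' ^ 2 + S g` the relation `f ∘ g = M ∘ f` gives the transformation rule
for `S f`. Conversely, if `F = f ∘ g` has the same Schwarzian as `f`, post-compose `F` with the
Möbius map `M` for which `M ∘ F` and `f` agree to second order at one point. The pre-Schwarzians
`P = f'' / f'` of both satisfy `P' = S + P ^ 2 / 2`, so their difference solves a linear equation
`q' = A q` with `q = 0` at that point and vanishes identically; two more linear equations of the
same kind give `M ∘ F = f` near the point, and on the whole disc by the identity theorem.
Uniqueness holds because two Möbius maps agreeing on the infinite set `f(𝔻)` have proportional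
matrices.
-/

noncomputable def schwarzian (f : ℂ → ℂ) (z : ℂ) : ℂ :=
  deriv (fun w => deriv (deriv f) w / deriv f w) z -
    (1 / 2) * (deriv (deriv f) z / deriv f z) ^ 2

open Filter Metric Set
open scoped Topology

noncomputable def preSchwarzian (f : ℂ → ℂ) (z : ℂ) : ℂ :=
  deriv (deriv f) z / deriv f z

noncomputable def mobius (a b c d w : ℂ) : ℂ :=
  (a * w + b) / (c * w + d)

theorem schwarzian_eq_deriv_preSchwarzian (f : ℂ → ℂ) (z : ℂ) :
    schwarzian f z = deriv (preSchwarzian f) z - 1 / 2 * preSchwarzian f z ^ 2 :=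
  rfl

section Mobius

variable {a b c d z : ℂ}

theorem hasDerivAt_mul_add (c d z : ℂ) : HasDerivAt (fun w => c * w + d) c z := by
  simpa using ((hasDerivAt_id z).const_mul c).add_const d

theorem hasDerivAt_mobius (h : c * z + d ≠ 0) :
    HasDerivAt (mobius a b c d) ((a * d - b * c) / (c * z + d) ^ 2) z := by
  refine ((hasDerivAt_mul_add a b z).fun_div (hasDerivAt_mul_add c d z) h).congr_deriv ?_
  ring

theorem analyticAt_mobius (h : c * z + d ≠ 0) : AnalyticAt ℂ (mobius a b c d) z := by
  unfold mobius
  fun_prop (disch := exact h)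

theorem deriv_mobius_ne_zero (hdet : a * d - b * c ≠ 0) (h : c * z + d ≠ 0) :
    deriv (mobius a b c d) z ≠ 0 := by
  rw [(hasDerivAt_mobius h).deriv]
  exact div_ne_zero hdet (pow_ne_zero 2 h)

theorem preSchwarzian_mobius (hdet : a * d - b * c ≠ 0) (h : c * z + d ≠ 0) :
    preSchwarzian (mobius a b c d) z = -2 * c / (c * z + d) := by
  have hderiv :
      deriv (mobius a b c d) =ᶠ[𝓝 z] fun w => (a * d - b * c) / (c * w + d) ^ 2 := by
    filter_upwards [(hasDerivAt_mul_add c d z).continuousAt.eventually_ne h] with w hw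
    exact (hasDerivAt_mobius hw).deriv
  have := (hasDerivAt_const z (a * d - b * c)).fun_div ((hasDerivAt_mul_add c d z).fun_pow 2)
    (pow_ne_zero 2 h)
  rw [preSchwarzian, hderiv.deriv_eq, this.deriv, hderiv.eq_of_nhds]
  generalize a * d - b * c = k at hdet ⊢
  field_simp
  ring

theorem schwarzian_mobius (hdet : a * d - b * c ≠ 0) (h : c * z + d ≠ 0) :
    schwarzian (mobius a b c d) z = 0 := by
  have hpre : preSchwarzian (mobius a b c d) =ᶠ[𝓝 z] fun w => -2 * c / (c * w + d) := by
    filter_upwards [(hasDerivAt_mul_add c d z).continuousAt.eventually_ne h] with w hw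
    exact preSchwarzian_mobius hdet hw
  rw [schwarzian_eq_deriv_preSchwarzian, hpre.deriv_eq, hpre.eq_of_nhds,
    ((hasDerivAt_const z (-2 * c)).fun_div (hasDerivAt_mul_add c d z) h).deriv]
  field_simp
  ring

end Mobius

section ChainRule

variable {f g : ℂ → ℂ} {z : ℂ}

theorem AnalyticAt.preSchwarzian (hf : AnalyticAt ℂ f z) (hf' : deriv f z ≠ 0) :
    AnalyticAt ℂ (preSchwarzian f) z :=
  hf.deriv.deriv.div hf.deriv hf'

theorem deriv_deriv_eq_preSchwarzian_mul (hf' : deriv f z ≠ 0) :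
    deriv (deriv f) z = preSchwarzian f z * deriv f z := by
  rw [preSchwarzian, div_mul_cancel₀ _ hf']

theorem Filter.EventuallyEq.preSchwarzian (h : f =ᶠ[𝓝 z] g) :
    _root_.preSchwarzian f =ᶠ[𝓝 z] _root_.preSchwarzian g := by
  filter_upwards [h.deriv, h.deriv.deriv] with w h₁ h₂
  rw [_root_.preSchwarzian, _root_.preSchwarzian, h₁, h₂]

theorem Filter.EventuallyEq.schwarzian_eq (h : f =ᶠ[𝓝 z] g) :
    schwarzian f z = schwarzian g z := by
  rw [schwarzian_eq_deriv_preSchwarzian, schwarzian_eq_deriv_preSchwarzian,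
    h.preSchwarzian.deriv_eq, h.preSchwarzian.eq_of_nhds]

theorem preSchwarzian_comp (hf : AnalyticAt ℂ f (g z)) (hg : AnalyticAt ℂ g z)
    (hf' : deriv f (g z) ≠ 0) (hg' : deriv g z ≠ 0) :
    preSchwarzian (f ∘ g) z = preSchwarzian f (g z) * deriv g z + preSchwarzian g z := by
  have hderiv : deriv (f ∘ g) =ᶠ[𝓝 z] fun w => deriv f (g w) * deriv g w := by
    filter_upwards [hg.continuousAt.eventually hf.eventually_analyticAt, hg.eventually_analyticAt]
      with w hfw hgw
    exact deriv_comp w hfw.differentiableAt hgw.differentiableAt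
  have hderiv₂ : HasDerivAt (fun w => deriv f (g w) * deriv g w)
      (deriv (deriv f) (g z) * deriv g z * deriv g z + deriv f (g z) * deriv (deriv g) z) z :=
    (hf.deriv.differentiableAt.hasDerivAt.comp z hg.differentiableAt.hasDerivAt).mul
      hg.deriv.differentiableAt.hasDerivAt
  rw [_root_.preSchwarzian, hderiv.deriv_eq, hderiv₂.deriv, hderiv.eq_of_nhds,
    _root_.preSchwarzian, _root_.preSchwarzian]
  field_simp

theorem schwarzian_comp (hf : AnalyticAt ℂ f (g z)) (hg : AnalyticAt ℂ g z)
    (hf' : deriv f (g z) ≠ 0) (hg' : deriv g z ≠ 0) :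
    schwarzian (f ∘ g) z = schwarzian f (g z) * deriv g z ^ 2 + schwarzian g z := by
  have hpre : preSchwarzian (f ∘ g) =ᶠ[𝓝 z]
      fun w => preSchwarzian f (g w) * deriv g w + preSchwarzian g w := by
    filter_upwards [hg.continuousAt.eventually hf.eventually_analyticAt,
      hg.continuousAt.eventually (hf.deriv.continuousAt.eventually_ne hf'),
      hg.eventually_analyticAt, hg.deriv.continuousAt.eventually_ne hg']
      with w hfw hfw' hgw hgw'
    exact preSchwarzian_comp hfw hgw hfw' hgw'
  have hpre' : HasDerivAt (fun w => preSchwarzian f (g w) * deriv g w + preSchwarzian g w)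
      (deriv (preSchwarzian f) (g z) * deriv g z * deriv g z
        + preSchwarzian f (g z) * deriv (deriv g) z + deriv (preSchwarzian g) z) z :=
    (((hf.preSchwarzian hf').differentiableAt.hasDerivAt.comp z
      hg.differentiableAt.hasDerivAt).mul hg.deriv.differentiableAt.hasDerivAt).add
      (hg.preSchwarzian hg').differentiableAt.hasDerivAt
  simp only [schwarzian_eq_deriv_preSchwarzian, hpre.deriv_eq, hpre'.deriv, hpre.eq_of_nhds,
    deriv_deriv_eq_preSchwarzian_mul hg']
  ring

theorem schwarzian_mobius_comp {a b c d : ℂ} (hdet : a * d - b * c ≠ 0) (hf : AnalyticAt ℂ f z)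
    (hf' : deriv f z ≠ 0) (h : c * f z + d ≠ 0) :
    schwarzian (mobius a b c d ∘ f) z = schwarzian f z := by
  rw [schwarzian_comp (analyticAt_mobius h) hf (deriv_mobius_ne_zero hdet h) hf',
    schwarzian_mobius hdet h, zero_mul, zero_add]

end ChainRule

def IsMobiusAt (g : ℂ → ℂ) (z : ℂ) : Prop :=
  ∃ a b c d : ℂ, a * d - b * c ≠ 0 ∧ c * z + d ≠ 0 ∧ g =ᶠ[𝓝 z] mobius a b c d

namespace IsMobiusAt

variable {f g : ℂ → ℂ} {z : ℂ}

theorem analyticAt (hg : IsMobiusAt g z) : AnalyticAt ℂ g z :=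
  let ⟨_, _, _, _, _, h, hg⟩ := hg
  (analyticAt_mobius h).congr hg.symm

theorem deriv_ne_zero (hg : IsMobiusAt g z) : deriv g z ≠ 0 := by
  obtain ⟨a, b, c, d, hdet, h, hg⟩ := hg
  rw [hg.deriv_eq]
  exact deriv_mobius_ne_zero hdet h

theorem schwarzian_comp (hg : IsMobiusAt g z) (hf : AnalyticAt ℂ f (g z))
    (hf' : deriv f (g z) ≠ 0) :
    schwarzian (f ∘ g) z = schwarzian f (g z) * deriv g z ^ 2 := by
  obtain ⟨a, b, c, d, hdet, h, hg'⟩ := id hg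
  rw [_root_.schwarzian_comp hf hg.analyticAt hf' hg.deriv_ne_zero, hg'.schwarzian_eq,
    schwarzian_mobius hdet h, add_zero]

end IsMobiusAt

/-- An analytic solution of `u' = A • u` vanishing at `z₀` cannot have finite order there, since
differentiating lowers the order by one while multiplying by `A` does not. -/
theorem AnalyticAt.eventuallyEq_zero_of_deriv_eventuallyEq_smul {𝕜 E : Type*}
    [NontriviallyNormedField 𝕜] [CharZero 𝕜] [NormedAddCommGroup E] [NormedSpace 𝕜 E]
    [CompleteSpace E] {u : 𝕜 → E} {A : 𝕜 → 𝕜} {z₀ : 𝕜} (hu : AnalyticAt 𝕜 u z₀)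
    (hA : AnalyticAt 𝕜 A z₀) (h₀ : u z₀ = 0) (hder : ∀ᶠ w in 𝓝 z₀, deriv u w = A w • u w) :
    u =ᶠ[𝓝 z₀] 0 := by
  have hord : analyticOrderAt (deriv u) z₀ + 1 = analyticOrderAt u z₀ := by
    simpa [h₀] using hu.analyticOrderAt_deriv_add_one
  have hsmul : analyticOrderAt (deriv u) z₀ = analyticOrderAt A z₀ + analyticOrderAt u z₀ :=
    (analyticOrderAt_congr hder).trans (analyticOrderAt_smul hA hu)
  rw [hsmul] at hord
  have hle : analyticOrderAt u z₀ + 1 ≤ analyticOrderAt u z₀ := by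
    calc _ ≤ analyticOrderAt A z₀ + analyticOrderAt u z₀ + 1 := by gcongr; exact le_add_self
      _ = _ := hord
  exact analyticOrderAt_eq_top.mp <|
    by_contra fun hn => ((ENat.add_one_le_iff hn).mp hle).false

section LocalUniqueness

variable {f g : ℂ → ℂ} {z₀ : ℂ}

theorem preSchwarzian_eventuallyEq_of_schwarzian_eventuallyEq (hf : AnalyticAt ℂ f z₀)
    (hg : AnalyticAt ℂ g z₀) (hf' : deriv f z₀ ≠ 0) (hg' : deriv g z₀ ≠ 0)
    (hS : schwarzian f =ᶠ[𝓝 z₀] schwarzian g) (h₀ : preSchwarzian f z₀ = preSchwarzian g z₀) :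
    preSchwarzian f =ᶠ[𝓝 z₀] preSchwarzian g := by
  have hPf := hf.preSchwarzian hf'
  have hPg := hg.preSchwarzian hg'
  have hode : ∀ᶠ w in 𝓝 z₀, deriv (preSchwarzian f - preSchwarzian g) w =
      ((preSchwarzian f w + preSchwarzian g w) / 2) • (preSchwarzian f - preSchwarzian g) w := by
    filter_upwards [hPf.eventually_analyticAt, hPg.eventually_analyticAt, hS]
      with w hfw hgw hSw
    rw [schwarzian_eq_deriv_preSchwarzian, schwarzian_eq_deriv_preSchwarzian] at hSw
    rw [deriv_sub hfw.differentiableAt hgw.differentiableAt, smul_eq_mul, Pi.sub_apply]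
    linear_combination hSw
  exact eventuallyEq_iff_sub.mpr <| (hPf.sub hPg).eventuallyEq_zero_of_deriv_eventuallyEq_smul
    (hPf.fun_add hPg).div_const (sub_eq_zero.mpr h₀) hode

theorem eventuallyEq_of_preSchwarzian_eventuallyEq (hf : AnalyticAt ℂ f z₀)
    (hg : AnalyticAt ℂ g z₀) (hg' : deriv g z₀ ≠ 0)
    (hP : preSchwarzian f =ᶠ[𝓝 z₀] preSchwarzian g) (h₀ : f z₀ = g z₀)
    (h₁ : deriv f z₀ = deriv g z₀) : f =ᶠ[𝓝 z₀] g := by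
  have hf' : deriv f z₀ ≠ 0 := h₁ ▸ hg'
  have hode₁ : ∀ᶠ w in 𝓝 z₀,
      deriv (deriv f - deriv g) w = preSchwarzian g w • (deriv f - deriv g) w := by
    filter_upwards [hf.eventually_analyticAt, hg.eventually_analyticAt,
      hf.deriv.continuousAt.eventually_ne hf', hg.deriv.continuousAt.eventually_ne hg', hP]
      with w hfw hgw hfw' hgw' hPw
    rw [deriv_sub hfw.deriv.differentiableAt hgw.deriv.differentiableAt,
      deriv_deriv_eq_preSchwarzian_mul hfw', deriv_deriv_eq_preSchwarzian_mul hgw', hPw,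
      smul_eq_mul, Pi.sub_apply]
    ring
  have hderiv : deriv f =ᶠ[𝓝 z₀] deriv g := eventuallyEq_iff_sub.mpr <|
    (hf.deriv.sub hg.deriv).eventuallyEq_zero_of_deriv_eventuallyEq_smul (hg.preSchwarzian hg')
      (sub_eq_zero.mpr h₁) hode₁
  have hode₀ : ∀ᶠ w in 𝓝 z₀, deriv (f - g) w = (0 : ℂ) • (f - g) w := by
    filter_upwards [hf.eventually_analyticAt, hg.eventually_analyticAt, hderiv]
      with w hfw hgw hw
    rw [deriv_sub hfw.differentiableAt hgw.differentiableAt, hw, sub_self, zero_smul]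
  exact eventuallyEq_iff_sub.mpr <| (hf.sub hg).eventuallyEq_zero_of_deriv_eventuallyEq_smul
    analyticAt_const (sub_eq_zero.mpr h₀) hode₀

theorem eventuallyEq_of_schwarzian_eventuallyEq (hf : AnalyticAt ℂ f z₀)
    (hg : AnalyticAt ℂ g z₀) (hg' : deriv g z₀ ≠ 0) (hS : schwarzian f =ᶠ[𝓝 z₀] schwarzian g)
    (h₀ : f z₀ = g z₀) (h₁ : deriv f z₀ = deriv g z₀)
    (h₂ : preSchwarzian f z₀ = preSchwarzian g z₀) : f =ᶠ[𝓝 z₀] g :=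
  eventuallyEq_of_preSchwarzian_eventuallyEq hf hg hg'
    (preSchwarzian_eventuallyEq_of_schwarzian_eventuallyEq hf hg (h₁ ▸ hg') hg' hS h₂) h₀ h₁

end LocalUniqueness

theorem exists_mobius_comp_eq_jet {F : ℂ → ℂ} {z₀ : ℂ} (hF : AnalyticAt ℂ F z₀)
    (hF' : deriv F z₀ ≠ 0) (w₀ w₁ p : ℂ) (hw₁ : w₁ ≠ 0) :
    ∃ a b c d : ℂ, a * d - b * c ≠ 0 ∧ c * F z₀ + d ≠ 0 ∧ mobius a b c d (F z₀) = w₀ ∧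
      deriv (mobius a b c d ∘ F) z₀ = w₁ ∧ preSchwarzian (mobius a b c d ∘ F) z₀ = p := by
  -- `M w = w₀ + α (w - F z₀) / (1 + c (w - F z₀))`
  set α := w₁ / deriv F z₀
  set c := (preSchwarzian F z₀ - p) / (2 * deriv F z₀) with hc
  set d := 1 - c * F z₀
  have hdet : (w₀ * c + α) * d - (w₀ * d - α * F z₀) * c = α := by ring
  have hdet' : (w₀ * c + α) * d - (w₀ * d - α * F z₀) * c ≠ 0 := by
    rw [hdet]
    exact div_ne_zero hw₁ hF'
  have hden : c * F z₀ + d = 1 := by ring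
  have hden' : c * F z₀ + d ≠ 0 := by
    rw [hden]
    exact one_ne_zero
  refine ⟨w₀ * c + α, w₀ * d - α * F z₀, c, d, hdet', hden', ?_, ?_, ?_⟩
  · rw [mobius, hden, div_one]
    linear_combination w₀ * hden
  · rw [deriv_comp _ (analyticAt_mobius hden').differentiableAt hF.differentiableAt,
      (hasDerivAt_mobius hden').deriv, hdet, hden, one_pow, div_one]
    exact div_mul_cancel₀ w₁ hF'
  · rw [preSchwarzian_comp (analyticAt_mobius hden') hF (deriv_mobius_ne_zero hdet' hden') hF',
      preSchwarzian_mobius hdet' hden', hden, hc]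
    field_simp
    ring

theorem exists_div_det_eq_one {a b c d : ℂ} (hdet : a * d - b * c ≠ 0) :
    ∃ ρ : ℂ, ρ ≠ 0 ∧ a / ρ * (d / ρ) - b / ρ * (c / ρ) = 1 := by
  obtain ⟨ρ, hρ⟩ := IsAlgClosed.exists_pow_nat_eq (a * d - b * c) two_pos
  have hρ0 : ρ ≠ 0 := by
    rintro rfl
    exact hdet (by rw [← hρ]; norm_num)
  refine ⟨ρ, hρ0, ?_⟩
  field_simp
  linear_combination -hρ

theorem eq_mobius_of_mul_eq {a b c d x y : ℂ} (hdet : a * d - b * c ≠ 0)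
    (h : (c * x + d) * y = a * x + b) : c * x + d ≠ 0 ∧ y = mobius a b c d x := by
  have hden : c * x + d ≠ 0 := by
    intro hden
    have hnum : a * x + b = 0 := by rw [← h, hden, zero_mul]
    exact hdet (by linear_combination a * hden - c * hnum)
  exact ⟨hden, by rw [mobius, eq_div_iff hden, mul_comm, h]⟩

theorem exists_sl2_of_eventually_mul_eq {U : Set ℂ} (hU : IsPreconnected U) {z₀ : ℂ}
    (hz₀ : z₀ ∈ U) {f F : ℂ → ℂ} (hf : AnalyticOnNhd ℂ f U) (hF : AnalyticOnNhd ℂ F U)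
    {a b c d : ℂ} (hdet : a * d - b * c ≠ 0)
    (h : ∀ᶠ z in 𝓝 z₀, (c * f z + d) * F z = a * f z + b) :
    ∃ a b c d : ℂ, a * d - b * c = 1 ∧
      ∀ z ∈ U, c * f z + d ≠ 0 ∧ F z = mobius a b c d (f z) := by
  have hrel : EqOn (fun z => (c * f z + d) * F z) (fun z => a * f z + b) U :=
    AnalyticOnNhd.eqOn_of_preconnected_of_eventuallyEq (𝕜 := ℂ)
      (fun z hz => by have := hf z hz; have := hF z hz; fun_prop)
      (fun z hz => by have := hf z hz; fun_prop) hU hz₀ h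
  obtain ⟨ρ, hρ, hρdet⟩ := exists_div_det_eq_one hdet
  refine ⟨a / ρ, b / ρ, c / ρ, d / ρ, hρdet, fun z hz => eq_mobius_of_mul_eq ?_ ?_⟩
  · exact hρdet ▸ one_ne_zero
  · have := hrel hz
    field_simp
    linear_combination this

theorem exists_mobius_of_schwarzian_eq {U : Set ℂ} (hU : IsOpen U) (hUc : IsPreconnected U)
    {f F : ℂ → ℂ} (hf : AnalyticOnNhd ℂ f U) (hF : AnalyticOnNhd ℂ F U)
    (hf' : ∀ z ∈ U, deriv f z ≠ 0) (hF' : ∀ z ∈ U, deriv F z ≠ 0)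
    (hS : EqOn (schwarzian F) (schwarzian f) U) :
    ∃ a b c d : ℂ, a * d - b * c = 1 ∧
      ∀ z ∈ U, c * f z + d ≠ 0 ∧ F z = mobius a b c d (f z) := by
  rcases U.eq_empty_or_nonempty with rfl | ⟨z₀, hz₀⟩
  · exact ⟨1, 0, 0, 1, by ring, fun z hz => hz.elim⟩
  obtain ⟨a, b, c, d, hdet, hden, h₀, h₁, h₂⟩ := exists_mobius_comp_eq_jet (hF z₀ hz₀)
    (hF' z₀ hz₀) (f z₀) (deriv f z₀) (preSchwarzian f z₀) (hf' z₀ hz₀)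
  have hden_near : ∀ᶠ z in 𝓝 z₀, c * F z + d ≠ 0 :=
    ((hF z₀ hz₀).continuousAt.const_mul c).add_const d |>.eventually_ne hden
  have hS_near : schwarzian (mobius a b c d ∘ F) =ᶠ[𝓝 z₀] schwarzian f := by
    filter_upwards [hden_near, hU.mem_nhds hz₀] with z hz hzU
    rw [schwarzian_mobius_comp hdet (hF z hzU) (hF' z hzU) hz, hS hzU]
  have hloc : mobius a b c d ∘ F =ᶠ[𝓝 z₀] f :=
    eventuallyEq_of_schwarzian_eventuallyEq ((analyticAt_mobius hden).comp (hF z₀ hz₀))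
      (hf z₀ hz₀) (hf' z₀ hz₀) hS_near h₀ h₁ h₂
  -- `M ∘ F = f` says `F = M⁻¹ ∘ f`, where `M⁻¹` has the adjugate matrix `(d, -b, -c, a)`
  refine exists_sl2_of_eventually_mul_eq hUc hz₀ hf hF (a := d) (b := -b) (c := -c) (d := a)
    (by rwa [show d * a - -b * -c = a * d - b * c by ring]) ?_
  filter_upwards [hloc, hden_near] with z hz hzd
  rw [Function.comp_apply, mobius, div_eq_iff hzd] at hz
  linear_combination hz

theorem quadratic_coeffs_eq_zero {A B C u v w : ℂ} (huv : u ≠ v) (huw : u ≠ w) (hvw : v ≠ w)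
    (hu : A * u ^ 2 + B * u + C = 0) (hv : A * v ^ 2 + B * v + C = 0)
    (hw : A * w ^ 2 + B * w + C = 0) : A = 0 ∧ B = 0 ∧ C = 0 := by
  have huv' : A * (u + v) + B = 0 := (mul_eq_zero.mp
    (by linear_combination hu - hv : (u - v) * (A * (u + v) + B) = 0)).resolve_left
      (sub_ne_zero.mpr huv)
  have hvw' : A * (v + w) + B = 0 := (mul_eq_zero.mp
    (by linear_combination hv - hw : (v - w) * (A * (v + w) + B) = 0)).resolve_left
      (sub_ne_zero.mpr hvw)
  have hA : A = 0 := (mul_eq_zero.mp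
    (by linear_combination huv' - hvw' : (u - w) * A = 0)).resolve_left (sub_ne_zero.mpr huw)
  have hB : B = 0 := by linear_combination huv' - (u + v) * hA
  exact ⟨hA, hB, by linear_combination hu - u ^ 2 * hA - u * hB⟩

theorem eq_or_eq_neg_of_cross_mul_eq {S : Set ℂ} (hS : S.Infinite) {a b c d a' b' c' d' : ℂ}
    (hdet : a * d - b * c = 1) (hdet' : a' * d' - b' * c' = 1)
    (h : ∀ x ∈ S, (a * x + b) * (c' * x + d') = (a' * x + b') * (c * x + d)) :
    (a, b, c, d) = (a', b', c', d') ∨ (a, b, c, d) = (-a', -b', -c', -d') := by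
  obtain ⟨u, hu⟩ := hS.nonempty
  obtain ⟨v, hv, hvu⟩ := (hS.sdiff (Set.finite_singleton u)).nonempty
  obtain ⟨w, hw, hwuv⟩ := (hS.sdiff (Set.toFinite {u, v})).nonempty
  simp only [Set.mem_singleton_iff, Set.mem_insert_iff, not_or] at hvu hwuv
  have hquad : ∀ x ∈ S, (a * c' - a' * c) * x ^ 2 + (a * d' + b * c' - a' * d - b' * c) * x
      + (b * d' - b' * d) = 0 := fun x hx => by linear_combination h x hx
  obtain ⟨hA, hB, hC⟩ := quadratic_coeffs_eq_zero (Ne.symm hvu) (Ne.symm hwuv.1)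
    (Ne.symm hwuv.2) (hquad u hu) (hquad v hv) (hquad w hw)
  -- the two matrices differ by the scalar `p`, and comparing determinants gives `p ^ 2 = 1`
  set p := a * d' - c * b'
  have hp : (p - 1) * (p + 1) = 0 := by
    linear_combination p * hB - (b * d' - b' * d) * hA + (a * d - b * c) * hdet' + hdet
  have ha : a = a' * p := by linear_combination (-b') * hA - a * hdet'
  have hb : b = b' * p := by linear_combination a' * hC + (-b') * hB - b * hdet'
  have hc : c = c' * p := by linear_combination (-d') * hA - c * hdet'
  have hd : d = d' * p := by linear_combination c' * hC + (-d') * hB - d * hdet'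
  rcases mul_eq_zero.mp hp with hp | hp
  · left
    rw [ha, hb, hc, hd, sub_eq_zero.mp hp]
    simp
  · right
    rw [ha, hb, hc, hd, eq_neg_of_add_eq_zero_left hp]
    simp

theorem AnalyticAt.infinite_image_of_deriv_ne_zero {f : ℂ → ℂ} {z₀ : ℂ} {U : Set ℂ}
    (hf : AnalyticAt ℂ f z₀) (hf' : deriv f z₀ ≠ 0) (hU : U ∈ 𝓝 z₀) : (f '' U).Infinite := by
  rcases hf.eventually_constant_or_nhds_le_map_nhds with hconst | hopen
  · have hconst : f =ᶠ[𝓝 z₀] fun _ => f z₀ := hconst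
    exact absurd (by rw [hconst.deriv_eq, deriv_const]) hf'
  · exact infinite_of_mem_nhds (f z₀) (hopen (image_mem_map hU))

theorem deformation_quadratic_differential_correspondence_general
    (G : Type*) [Group G]
    (ι : G → ℂ → ℂ)
    (hmob : ∀ g : G, ∃ a b c d : ℂ, a * d - b * c ≠ 0 ∧
      ∀ z ∈ Metric.ball (0 : ℂ) 1, c * z + d ≠ 0 ∧ ι g z = (a * z + b) / (c * z + d))
    (hbij : ∀ g : G, Set.BijOn (ι g) (Metric.ball (0 : ℂ) 1) (Metric.ball (0 : ℂ) 1))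
    (hmul : ∀ g h : G, ∀ z ∈ Metric.ball (0 : ℂ) 1, ι (g * h) z = ι g (ι h z))
    (f : ℂ → ℂ) (hf : DifferentiableOn ℂ f (Metric.ball 0 1))
    (hf' : ∀ z ∈ Metric.ball (0 : ℂ) 1, deriv f z ≠ 0) :
    ((∀ g : G, ∀ z ∈ Metric.ball (0 : ℂ) 1,
        schwarzian f z = schwarzian f (ι g z) * (deriv (ι g) z) ^ 2) ↔
      (∀ g : G, ∃ a b c d : ℂ, a * d - b * c = 1 ∧
        ∀ z ∈ Metric.ball (0 : ℂ) 1, c * f z + d ≠ 0 ∧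
          f (ι g z) = (a * f z + b) / (c * f z + d))) ∧
    (∀ g : G, ∀ a b c d a' b' c' d' : ℂ,
      a * d - b * c = 1 → a' * d' - b' * c' = 1 →
      (∀ z ∈ Metric.ball (0 : ℂ) 1, c * f z + d ≠ 0 ∧
        f (ι g z) = (a * f z + b) / (c * f z + d)) →
      (∀ z ∈ Metric.ball (0 : ℂ) 1, c' * f z + d' ≠ 0 ∧
        f (ι g z) = (a' * f z + b') / (c' * f z + d')) →
      ((a, b, c, d) = (a', b', c', d') ∨ (a, b, c, d) = (-a', -b', -c', -d'))) ∧
    (∀ g h : G, ∀ a₁ b₁ c₁ d₁ a₂ b₂ c₂ d₂ : ℂ,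
      a₁ * d₁ - b₁ * c₁ = 1 → a₂ * d₂ - b₂ * c₂ = 1 →
      (∀ z ∈ Metric.ball (0 : ℂ) 1, c₁ * f z + d₁ ≠ 0 ∧
        f (ι g z) = (a₁ * f z + b₁) / (c₁ * f z + d₁)) →
      (∀ z ∈ Metric.ball (0 : ℂ) 1, c₂ * f z + d₂ ≠ 0 ∧
        f (ι h z) = (a₂ * f z + b₂) / (c₂ * f z + d₂)) →
      ∀ z ∈ Metric.ball (0 : ℂ) 1,
        f (ι (g * h) z) =
          (a₁ * ((a₂ * f z + b₂) / (c₂ * f z + d₂)) + b₁) /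
            (c₁ * ((a₂ * f z + b₂) / (c₂ * f z + d₂)) + d₁)) := by
  have hfA : AnalyticOnNhd ℂ f (ball 0 1) := hf.analyticOnNhd isOpen_ball
  have hmaps : ∀ g, MapsTo (ι g) (ball 0 1) (ball 0 1) := fun g => (hbij g).mapsTo
  have hι : ∀ g, ∀ z ∈ ball (0 : ℂ) 1, IsMobiusAt (ι g) z := fun g z hz => by
    obtain ⟨a, b, c, d, hdet, hloc⟩ := hmob g
    exact ⟨a, b, c, d, hdet, (hloc z hz).1,
      eventually_of_mem (isOpen_ball.mem_nhds hz) fun w hw => (hloc w hw).2⟩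
  have hS : ∀ g, ∀ z ∈ ball (0 : ℂ) 1,
      schwarzian (f ∘ ι g) z = schwarzian f (ι g z) * deriv (ι g) z ^ 2 := fun g z hz =>
    (hι g z hz).schwarzian_comp (hfA _ (hmaps g hz)) (hf' _ (hmaps g hz))
  refine ⟨⟨fun hQD g => ?_, fun hrep g z hz => ?_⟩,
    fun g a b c d a' b' c' d' hdet hdet' hrep hrep' => ?_,
    fun g h a₁ b₁ c₁ d₁ a₂ b₂ c₂ d₂ _ _ hrep₁ hrep₂ z hz => ?_⟩
  · refine exists_mobius_of_schwarzian_eq (F := f ∘ ι g) isOpen_ball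
      (convex_ball 0 1).isPreconnected hfA
      (fun z hz => (hfA _ (hmaps g hz)).comp (hι g z hz).analyticAt) hf' (fun z hz => ?_)
      (fun z hz => (hS g z hz).trans (hQD g z hz).symm)
    rw [deriv_comp z (hfA _ (hmaps g hz)).differentiableAt
      (hι g z hz).analyticAt.differentiableAt]
    exact mul_ne_zero (hf' _ (hmaps g hz)) (hι g z hz).deriv_ne_zero
  · obtain ⟨a, b, c, d, hdet, hloc⟩ := hrep g
    have hfg : mobius a b c d ∘ f =ᶠ[𝓝 z] f ∘ ι g :=
      eventually_of_mem (isOpen_ball.mem_nhds hz) fun w hw => (hloc w hw).2.symm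
    rw [← schwarzian_mobius_comp (hdet ▸ one_ne_zero) (hfA z hz) (hf' z hz) (hloc z hz).1,
      hfg.schwarzian_eq, hS g z hz]
  · have h0 : (0 : ℂ) ∈ ball (0 : ℂ) 1 := mem_ball_self one_pos
    refine eq_or_eq_neg_of_cross_mul_eq ((hfA 0 h0).infinite_image_of_deriv_ne_zero (hf' 0 h0)
      (isOpen_ball.mem_nhds h0)) hdet hdet' ?_
    rintro _ ⟨z, hz, rfl⟩
    exact (div_eq_div_iff (hrep z hz).1 (hrep' z hz).1).mp
      ((hrep z hz).2.symm.trans (hrep' z hz).2)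
  · rw [hmul g h z hz, (hrep₁ _ (hmaps h hz)).2, (hrep₂ z hz).2]

/-- for a group `G` of Möbius transformations mapping the unit disc
onto itself (acting via `ι`) and a locally injective holomorphic `f` on `𝔻`, the
Schwarzian `S_f` is a quadratic differential for `G` iff for each `g ∈ G` there is a
(determinant-one) Möbius transformation `M_g` with `f ∘ g = M_g ∘ f` on `𝔻`;
moreover `M_g` is unique (up to the sign of the normalized matrix) and
`g ↦ M_g` is a group homomorphism, i.e. `f ∘ ι(g·h) = M_g ∘ M_h ∘ f` on `𝔻`. -/
theorem deformation_quadratic_differential_correspondence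
    (G : Type*) [Group G]
    (ι : G → ℂ → ℂ)
    (hmob : ∀ g : G, ∃ a b c d : ℂ, a * d - b * c ≠ 0 ∧
      ∀ z ∈ Metric.ball (0 : ℂ) 1, c * z + d ≠ 0 ∧ ι g z = (a * z + b) / (c * z + d))
    (hbij : ∀ g : G, Set.BijOn (ι g) (Metric.ball (0 : ℂ) 1) (Metric.ball (0 : ℂ) 1))
    (hone : ∀ z ∈ Metric.ball (0 : ℂ) 1, ι 1 z = z)
    (hmul : ∀ g h : G, ∀ z ∈ Metric.ball (0 : ℂ) 1, ι (g * h) z = ι g (ι h z))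
    (f : ℂ → ℂ) (hf : DifferentiableOn ℂ f (Metric.ball 0 1))
    (hf' : ∀ z ∈ Metric.ball (0 : ℂ) 1, deriv f z ≠ 0) :
    ((∀ g : G, ∀ z ∈ Metric.ball (0 : ℂ) 1,
        schwarzian f z = schwarzian f (ι g z) * (deriv (ι g) z) ^ 2) ↔
      (∀ g : G, ∃ a b c d : ℂ, a * d - b * c = 1 ∧
        ∀ z ∈ Metric.ball (0 : ℂ) 1, c * f z + d ≠ 0 ∧
          f (ι g z) = (a * f z + b) / (c * f z + d))) ∧
    (∀ g : G, ∀ a b c d a' b' c' d' : ℂ,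
      a * d - b * c = 1 → a' * d' - b' * c' = 1 →
      (∀ z ∈ Metric.ball (0 : ℂ) 1, c * f z + d ≠ 0 ∧
        f (ι g z) = (a * f z + b) / (c * f z + d)) →
      (∀ z ∈ Metric.ball (0 : ℂ) 1, c' * f z + d' ≠ 0 ∧
        f (ι g z) = (a' * f z + b') / (c' * f z + d')) →
      ((a, b, c, d) = (a', b', c', d') ∨ (a, b, c, d) = (-a', -b', -c', -d'))) ∧
    (∀ g h : G, ∀ a₁ b₁ c₁ d₁ a₂ b₂ c₂ d₂ : ℂ,
      a₁ * d₁ - b₁ * c₁ = 1 → a₂ * d₂ - b₂ * c₂ = 1 →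
      (∀ z ∈ Metric.ball (0 : ℂ) 1, c₁ * f z + d₁ ≠ 0 ∧
        f (ι g z) = (a₁ * f z + b₁) / (c₁ * f z + d₁)) →
      (∀ z ∈ Metric.ball (0 : ℂ) 1, c₂ * f z + d₂ ≠ 0 ∧
        f (ι h z) = (a₂ * f z + b₂) / (c₂ * f z + d₂)) →
      ∀ z ∈ Metric.ball (0 : ℂ) 1,
        f (ι (g * h) z) =
          (a₁ * ((a₂ * f z + b₂) / (c₂ * f z + d₂)) + b₁) /
            (c₁ * ((a₂ * f z + b₂) / (c₂ * f z + d₂)) + d₁)) :=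
  deformation_quadratic_differential_correspondence_general G ι hmob hbij hmul f hf hf'
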